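/- Suppose ☐ is a weak shuffle product on K⟨X⟩ and a, b are distinct letters with f₁(a⊗b) = f₁(b⊗a) = 1. Then f₁(a⊗a) = f₂(a⊗a) = f₁(b⊗b) = f₂(b⊗b) = 1, and for any third letter c, f₁(a⊗c) = f₁(b⊗c) ∈ {0,1} and f₁(c⊗a) = f₁(c⊗b) ∈ {0,1}. -/

import Mathlib

/-!
Expand `([x] ☐ [y]) ☐ [z] = [x] ☐ ([y] ☐ [z])` for letters `x, y, z` by the recursion alone
(so a two-letter word times a letter is expanded from the left on one side and a letter times a
two-letter word on the other) and compare coefficients of three-letter words. Together with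
`f₂(x⊗y) = f₁(y⊗x)` for `x ≠ y`, which is commutativity on letters, the `aba`-coefficient for
`(a, a, b)` and `(b, a, a)` forces `f₁(a⊗a) = f₂(a⊗a) = 1`. For a third letter `c` the `abc`- and
`cab`-coefficients for `(a, b, c)` give `f₁(a⊗c) f₁(b⊗c) = f₁(b⊗c)` and
`f₁(c⊗a) = f₁(c⊗b) f₁(c⊗a)`; exchanging `a` and `b` shows that both values agree and are idempotent.
-/

theorem eq_and_eq_zero_or_one_of_mul_eq {M₀ : Type*} [CommMonoidWithZero M₀]
    [IsRightCancelMulZero M₀] {p q : M₀} (hpq : p * q = q) (hqp : q * p = p) :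
    p = q ∧ (p = 0 ∨ p = 1) := by
  obtain rfl : p = q := by rw [← hqp, mul_comm, hpq]
  exact ⟨rfl, eq_zero_or_one_of_sq_eq_self (by rw [sq, hpq])⟩

open Finsupp

namespace WeakShuffle

variable {K X : Type*}

def Recursion [CommSemiring K]
    (B : (List X →₀ K) →ₗ[K] (List X →₀ K) →ₗ[K] (List X →₀ K)) (f1 f2 : X → X → K) : Prop :=
  ∀ (a b : X) (u v : List X),
    B (single (a :: u) 1) (single (b :: v) 1) =
      f1 a b • mapDomain (a :: ·) (B (single u 1) (single (b :: v) 1)) +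
        f2 a b • mapDomain (b :: ·) (B (single (a :: u) 1) (single v 1))

section CommSemiring

variable [CommSemiring K] {B : (List X →₀ K) →ₗ[K] (List X →₀ K) →ₗ[K] (List X →₀ K)}
  {f1 f2 : X → X → K}

theorem mul_single_nil (hcomm : ∀ x y, B x y = B y x)
    (hunit : ∀ x, B (single [] 1) x = x) (x : List X →₀ K) : B x (single [] 1) = x := by
  rw [hcomm, hunit]

theorem letter_mul_letter (hcomm : ∀ x y, B x y = B y x)
    (hunit : ∀ x, B (single [] 1) x = x) (hrec : Recursion B f1 f2) (x y : X) :
    B (single [x] 1) (single [y] 1) = f1 x y • single [x, y] 1 + f2 x y • single [y, x] 1 := by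
  rw [hrec, hunit, mul_single_nil hcomm hunit, mapDomain_single, mapDomain_single]

theorem f2_eq_f1_swap (hcomm : ∀ x y, B x y = B y x)
    (hunit : ∀ x, B (single [] 1) x = x) (hrec : Recursion B f1 f2) {x y : X}
    (hxy : x ≠ y) : f2 x y = f1 y x := by
  have h := congrArg (· [y, x]) (hcomm (single [x] 1) (single [y] 1))
  simpa [letter_mul_letter hcomm hunit hrec, hxy, hxy.symm] using h

theorem letter_mul_pair (hcomm : ∀ x y, B x y = B y x)
    (hunit : ∀ x, B (single [] 1) x = x) (hrec : Recursion B f1 f2) (x y z : X) :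
    B (single [x] 1) (single [y, z] 1) =
      f1 x y • single [x, y, z] 1 + (f2 x y * f1 x z) • single [y, x, z] 1 +
        (f2 x y * f2 x z) • single [y, z, x] 1 := by
  rw [hrec, hunit, letter_mul_letter hcomm hunit hrec]
  simp only [mapDomain_single, mapDomain_add, mapDomain_smul, smul_add, smul_smul, add_assoc]

theorem pair_mul_letter (hcomm : ∀ x y, B x y = B y x)
    (hunit : ∀ x, B (single [] 1) x = x) (hrec : Recursion B f1 f2) (x y z : X) :
    B (single [x, y] 1) (single [z] 1) =
      (f1 x z * f1 y z) • single [x, y, z] 1 + (f1 x z * f2 y z) • single [x, z, y] 1 +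
        f2 x z • single [z, x, y] 1 := by
  rw [hrec, mul_single_nil hcomm hunit, letter_mul_letter hcomm hunit hrec]
  simp only [mapDomain_single, mapDomain_add, mapDomain_smul, smul_add, smul_smul]

theorem mul_assoc_letters (hcomm : ∀ x y, B x y = B y x)
    (hassoc : ∀ x y z, B (B x y) z = B x (B y z))
    (hunit : ∀ x, B (single [] 1) x = x) (hrec : Recursion B f1 f2) (x y z : X) :
    f1 x y • B (single [x, y] 1) (single [z] 1) + f2 x y • B (single [y, x] 1) (single [z] 1) =
      f1 y z • B (single [x] 1) (single [y, z] 1) + f2 y z • B (single [x] 1) (single [z, y] 1) := by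
  have h := hassoc (single [x] 1) (single [y] 1) (single [z] 1)
  simpa only [letter_mul_letter hcomm hunit hrec, map_add, map_smul, LinearMap.add_apply,
    LinearMap.smul_apply] using h

theorem f1_mul_f1_right_eq (hcomm : ∀ x y, B x y = B y x)
    (hassoc : ∀ x y z, B (B x y) z = B x (B y z))
    (hunit : ∀ x, B (single [] 1) x = x) (hrec : Recursion B f1 f2) {a b c : X}
    (hab : a ≠ b) (hca : c ≠ a) (hcb : c ≠ b) (h1 : f1 a b = 1) :
    f1 a c * f1 b c = f1 b c := by
  simpa [letter_mul_pair hcomm hunit hrec, pair_mul_letter hcomm hunit hrec, hab, hab.symm, hca,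
    hca.symm, hcb, hcb.symm, h1] using
    congrArg (· [a, b, c]) (mul_assoc_letters hcomm hassoc hunit hrec a b c)

theorem f1_eq_f1_mul_f1_left (hcomm : ∀ x y, B x y = B y x)
    (hassoc : ∀ x y z, B (B x y) z = B x (B y z))
    (hunit : ∀ x, B (single [] 1) x = x) (hrec : Recursion B f1 f2) {a b c : X}
    (hab : a ≠ b) (hca : c ≠ a) (hcb : c ≠ b) (h1 : f1 a b = 1) :
    f1 c a = f1 c b * f1 c a := by
  simpa [letter_mul_pair hcomm hunit hrec, pair_mul_letter hcomm hunit hrec, hab, hab.symm, hca,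
    hca.symm, hcb, hcb.symm, h1, f2_eq_f1_swap hcomm hunit hrec hca.symm,
    f2_eq_f1_swap hcomm hunit hrec hcb.symm] using
    congrArg (· [c, a, b]) (mul_assoc_letters hcomm hassoc hunit hrec a b c)

end CommSemiring

section CommRing

variable [CommRing K] {B : (List X →₀ K) →ₗ[K] (List X →₀ K) →ₗ[K] (List X →₀ K)}
  {f1 f2 : X → X → K}

theorem f1_self_eq_one (hcomm : ∀ x y, B x y = B y x)
    (hassoc : ∀ x y z, B (B x y) z = B x (B y z))
    (hunit : ∀ x, B (single [] 1) x = x) (hrec : Recursion B f1 f2) {a b : X}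
    (hab : a ≠ b) (h1 : f1 a b = 1) (h2 : f1 b a = 1) : f1 a a = 1 := by
  have h : f1 a a + f2 a a = f2 a a + 1 := by
    simpa [letter_mul_pair hcomm hunit hrec, pair_mul_letter hcomm hunit hrec, hab, hab.symm,
      f2_eq_f1_swap hcomm hunit hrec hab, h1, h2] using
      congrArg (· [a, b, a]) (mul_assoc_letters hcomm hassoc hunit hrec a a b)
  linear_combination h

theorem f2_self_eq_one (hcomm : ∀ x y, B x y = B y x)
    (hassoc : ∀ x y z, B (B x y) z = B x (B y z))
    (hunit : ∀ x, B (single [] 1) x = x) (hrec : Recursion B f1 f2) {a b : X}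
    (hab : a ≠ b) (h1 : f1 a b = 1) (h2 : f1 b a = 1) : f2 a a = 1 := by
  have h : 1 + f1 a a = f1 a a + f2 a a := by
    simpa [letter_mul_pair hcomm hunit hrec, pair_mul_letter hcomm hunit hrec, hab, hab.symm,
      f2_eq_f1_swap hcomm hunit hrec hab.symm, h1, h2] using
      congrArg (· [a, b, a]) (mul_assoc_letters hcomm hassoc hunit hrec b a a)
  linear_combination -h

end CommRing

end WeakShuffle

open WeakShuffle in
theorem weakShuffle_both_one_general {K X : Type*} [Field K]
    (B : (List X →₀ K) →ₗ[K] (List X →₀ K) →ₗ[K] (List X →₀ K))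
    (f1 f2 : X → X → K)
    (hcomm : ∀ x y, B x y = B y x)
    (hassoc : ∀ x y z, B (B x y) z = B x (B y z))
    (hunit : ∀ x, B (Finsupp.single [] 1) x = x)
    (hrec : ∀ (a b : X) (u v : List X),
      B (Finsupp.single (a :: u) 1) (Finsupp.single (b :: v) 1) =
        f1 a b • Finsupp.mapDomain (a :: ·)
            (B (Finsupp.single u 1) (Finsupp.single (b :: v) 1)) +
        f2 a b • Finsupp.mapDomain (b :: ·)
            (B (Finsupp.single (a :: u) 1) (Finsupp.single v 1)))
    (a b : X) (hab : a ≠ b) (h1 : f1 a b = 1) (h2 : f1 b a = 1) :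
    (f1 a a = 1 ∧ f2 a a = 1 ∧ f1 b b = 1 ∧ f2 b b = 1) ∧
      ∀ c : X, c ≠ a → c ≠ b →
        (f1 a c = f1 b c ∧ (f1 a c = 0 ∨ f1 a c = 1)) ∧
        (f1 c a = f1 c b ∧ (f1 c a = 0 ∨ f1 c a = 1)) := by
  refine ⟨⟨f1_self_eq_one hcomm hassoc hunit hrec hab h1 h2,
    f2_self_eq_one hcomm hassoc hunit hrec hab h1 h2,
    f1_self_eq_one hcomm hassoc hunit hrec hab.symm h2 h1,
    f2_self_eq_one hcomm hassoc hunit hrec hab.symm h2 h1⟩, fun c hca hcb => ⟨?_, ?_⟩⟩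
  · exact eq_and_eq_zero_or_one_of_mul_eq
      (f1_mul_f1_right_eq hcomm hassoc hunit hrec hab hca hcb h1)
      (f1_mul_f1_right_eq hcomm hassoc hunit hrec hab.symm hcb hca h2)
  · exact eq_and_eq_zero_or_one_of_mul_eq
      (f1_eq_f1_mul_f1_left hcomm hassoc hunit hrec hab.symm hcb hca h2).symm
      (f1_eq_f1_mul_f1_left hcomm hassoc hunit hrec hab hca hcb h1).symm

/-- For a weak shuffle product, if `a ≠ b` satisfy `f₁(a⊗b) = f₁(b⊗a) = 1`, then
`f₁(a⊗a) = f₂(a⊗a) = f₁(b⊗b) = f₂(b⊗b) = 1`, and for any third letter `c`,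
`f₁(a⊗c) = f₁(b⊗c) ∈ {0,1}` and `f₁(c⊗a) = f₁(c⊗b) ∈ {0,1}`. -/
theorem weakShuffle_both_one {K X : Type*} [Field K] [CharZero K]
    (B : (List X →₀ K) →ₗ[K] (List X →₀ K) →ₗ[K] (List X →₀ K))
    (f1 f2 : X → X → K)
    (hcomm : ∀ x y, B x y = B y x)
    (hassoc : ∀ x y z, B (B x y) z = B x (B y z))
    (hunit : ∀ x, B (Finsupp.single [] 1) x = x)
    (hrec : ∀ (a b : X) (u v : List X),
      B (Finsupp.single (a :: u) 1) (Finsupp.single (b :: v) 1) =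
        f1 a b • Finsupp.mapDomain (a :: ·)
            (B (Finsupp.single u 1) (Finsupp.single (b :: v) 1)) +
        f2 a b • Finsupp.mapDomain (b :: ·)
            (B (Finsupp.single (a :: u) 1) (Finsupp.single v 1)))
    (a b : X) (hab : a ≠ b) (h1 : f1 a b = 1) (h2 : f1 b a = 1) :
    (f1 a a = 1 ∧ f2 a a = 1 ∧ f1 b b = 1 ∧ f2 b b = 1) ∧
      ∀ c : X, c ≠ a → c ≠ b →
        (f1 a c = f1 b c ∧ (f1 a c = 0 ∨ f1 a c = 1)) ∧
        (f1 c a = f1 c b ∧ (f1 c a = 0 ∨ f1 c a = 1)) :=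
  weakShuffle_both_one_general B f1 f2 hcomm hassoc hunit hrec a b hab h1 h2
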